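/- arXiv:1711.10324 — 2 statements merged into one kernel-verified Lean document; each statement's English description precedes it below -/
import Mathlib

section
/- Let a, b ∈ ℂ be nonzero and let δ > 0. If |a| + |b| ≤ (1+δ)|a−b|, then 1 + Re(conj(a)·b)/(|a||b|) ≤ δ·(|a|+|b|)²/(|a||b|). -/
/-!
Write `s = |a| + |b|` and `d = |a - b|`. The law of cosines gives
`s² - d² = 2 (|a||b| + Re(conj(a)·b))`, and since `d ≤ s ≤ (1 + δ) d`,
`s² - d² = (s - d)(s + d) ≤ δ d · 2s ≤ 2δ s²`.
-/

open Complex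

open scoped RealInnerProductSpace

theorem sq_sub_sq_le_of_le_one_add_mul {s d δ : ℝ} (hδ : 0 ≤ δ) (hd : 0 ≤ d) (hds : d ≤ s)
    (hsd : s ≤ (1 + δ) * d) : s ^ 2 - d ^ 2 ≤ 2 * δ * s ^ 2 :=
  calc s ^ 2 - d ^ 2 = (s - d) * (s + d) := by ring
    _ ≤ (δ * d) * (2 * s) := by gcongr <;> linarith
    _ ≤ (δ * s) * (2 * s) := by gcongr; linarith
    _ = 2 * δ * s ^ 2 := by ring

section InnerProductSpace

variable {E : Type*} [NormedAddCommGroup E] [InnerProductSpace ℝ E]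

theorem add_norm_sq_sub_norm_sub_sq (x y : E) :
    (‖x‖ + ‖y‖) ^ 2 - ‖x - y‖ ^ 2 = 2 * (‖x‖ * ‖y‖ + ⟪x, y⟫) := by
  rw [norm_sub_sq_real]
  ring

theorem norm_mul_norm_add_inner_le_of_almost_flat {x y : E} {δ : ℝ} (hδ : 0 ≤ δ)
    (h : ‖x‖ + ‖y‖ ≤ (1 + δ) * ‖x - y‖) :
    ‖x‖ * ‖y‖ + ⟪x, y⟫ ≤ δ * (‖x‖ + ‖y‖) ^ 2 := by
  have key := sq_sub_sq_le_of_le_one_add_mul hδ (norm_nonneg _) (norm_sub_le x y) h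
  rw [add_norm_sq_sub_norm_sub_sq] at key
  linarith

end InnerProductSpace

theorem Complex.re_conj_mul_eq_inner (a b : ℂ) : (starRingEnd ℂ a * b).re = ⟪a, b⟫ := by
  rw [Complex.inner, mul_comm]

/-- If `a, b ≠ 0` and `|a| + |b| ≤ (1+δ)|a-b|`, then
`1 + cos(angle between a and b) ≤ δ (|a|+|b|)²/(|a||b|)`. -/
theorem one_add_cos_le_of_almost_flat
    (a b : ℂ) (ha : a ≠ 0) (hb : b ≠ 0) (δ : ℝ) (hδ : 0 < δ)
    (h : ‖a‖ + ‖b‖ ≤ (1 + δ) * ‖a - b‖) :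
    1 + (starRingEnd ℂ a * b).re / (‖a‖ * ‖b‖)
      ≤ δ * (‖a‖ + ‖b‖) ^ 2 / (‖a‖ * ‖b‖) := by
  have hab : 0 < ‖a‖ * ‖b‖ := mul_pos (norm_pos_iff.mpr ha) (norm_pos_iff.mpr hb)
  rw [one_add_div hab.ne', div_le_div_iff_of_pos_right hab, re_conj_mul_eq_inner]
  exact norm_mul_norm_add_inner_le_of_almost_flat hδ.le h
end

section
/- For n ≥ 1 define L_n := 2^{1−2n} · ∏_{j=1}^{n−1} (cos(1/j))^{−1}, and let (τ_j)_{j≥1} be any sequence of reals with 0 ≤ τ_j ≤ 2·tan(1/j) for all j. For k ≥ 1 define R_k := (3·∑_{j=k+1}^∞ L_j − L_k) − ∑_{j=k+1}^∞ 2·L_j·τ_j. Then lim_{k→∞} R_k / L_k = 0. -/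
/-!
The ratio `L_{n+1} / L_n = (4 cos (1/n))⁻¹` decreases to `1/4`, so the tail `∑_{j>k} L_j` lies
between the geometric series of ratios `1/4` and `(4 cos (1/(k+1)))⁻¹` started at `L_{k+1}`;
hence `∑_{j>k} L_j / L_k → 1/3`. Since `τ_j ≤ 2 tan (1/(k+1))` for `j > k`, the corner term
`∑_{j>k} 2 L_j τ_j` is at most `4 tan (1/(k+1))` times the tail, so it is `o(L_k)`.
Therefore `R_k / L_k → 3 · 1/3 - 1 - 0 = 0`.
-/

open Filter

noncomputable section

/-- The scales `L_n = 2^{1-2n} ∏_{j=1}^{n-1} (cos(1/j))⁻¹` of the patches in the recursive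
construction of the spiralling curve (the product is `1` when `n ≤ 1`). -/
def patchScale (n : ℕ) : ℝ :=
  (2 : ℝ) ^ ((1 : ℤ) - 2 * (n : ℤ)) * ∏ j ∈ Finset.Icc 1 (n - 1), (Real.cos (1 / (j : ℝ)))⁻¹

open Real

section GeometricComparison

variable {a : ℕ → ℝ} {r : ℝ}

lemma le_mul_pow_of_succ_le_mul (hr : 0 ≤ r) (h : ∀ n, a (n + 1) ≤ r * a n) (n : ℕ) :
    a n ≤ a 0 * r ^ n := by
  induction n with
  | zero => simp
  | succ n ih =>
    calc a (n + 1) ≤ r * a n := h n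
      _ ≤ r * (a 0 * r ^ n) := by gcongr
      _ = a 0 * r ^ (n + 1) := by ring

lemma mul_pow_le_of_mul_le_succ (hr : 0 ≤ r) (h : ∀ n, r * a n ≤ a (n + 1)) (n : ℕ) :
    a 0 * r ^ n ≤ a n := by
  induction n with
  | zero => simp
  | succ n ih =>
    calc a 0 * r ^ (n + 1) = r * (a 0 * r ^ n) := by ring
      _ ≤ r * a n := by gcongr
      _ ≤ a (n + 1) := h n

lemma summable_of_succ_le_mul (ha : ∀ n, 0 ≤ a n) (hr₀ : 0 ≤ r) (hr₁ : r < 1)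
    (h : ∀ n, a (n + 1) ≤ r * a n) : Summable a :=
  .of_nonneg_of_le ha (le_mul_pow_of_succ_le_mul hr₀ h)
    ((summable_geometric_of_lt_one hr₀ hr₁).mul_left _)

lemma tsum_le_of_succ_le_mul (ha : ∀ n, 0 ≤ a n) (hr₀ : 0 ≤ r) (hr₁ : r < 1)
    (h : ∀ n, a (n + 1) ≤ r * a n) : ∑' n, a n ≤ a 0 / (1 - r) :=
  calc ∑' n, a n ≤ ∑' n, a 0 * r ^ n :=
        (summable_of_succ_le_mul ha hr₀ hr₁ h).tsum_le_tsum (le_mul_pow_of_succ_le_mul hr₀ h)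
          ((summable_geometric_of_lt_one hr₀ hr₁).mul_left _)
    _ = a 0 / (1 - r) := by rw [tsum_mul_left, tsum_geometric_of_lt_one hr₀ hr₁, div_eq_mul_inv]

lemma div_le_tsum_of_mul_le_succ (hs : Summable a) (hr₀ : 0 ≤ r) (hr₁ : r < 1)
    (h : ∀ n, r * a n ≤ a (n + 1)) : a 0 / (1 - r) ≤ ∑' n, a n :=
  calc a 0 / (1 - r) = ∑' n, a 0 * r ^ n := by
        rw [tsum_mul_left, tsum_geometric_of_lt_one hr₀ hr₁, div_eq_mul_inv]
    _ ≤ ∑' n, a n :=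
        ((summable_geometric_of_lt_one hr₀ hr₁).mul_left _).tsum_le_tsum
          (mul_pow_le_of_mul_le_succ hr₀ h) hs

end GeometricComparison

section TrigAtOneDivNat

lemma one_div_natCast_mem_Icc (n : ℕ) : 1 / (n : ℝ) ∈ Set.Icc 0 1 :=
  ⟨Nat.one_div_cast_nonneg n, by simpa only [one_div] using Nat.cast_inv_le_one n⟩

lemma one_div_natCast_le_one_div {m n : ℕ} (hm : 1 ≤ m) (hmn : m ≤ n) :
    1 / (n : ℝ) ≤ 1 / (m : ℝ) :=
  one_div_le_one_div_of_le (by exact_mod_cast hm) (by exact_mod_cast hmn)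

lemma one_half_le_cos_one_div_natCast (n : ℕ) : 1 / 2 ≤ cos (1 / (n : ℝ)) := by
  obtain ⟨h₀, h₁⟩ := one_div_natCast_mem_Icc n
  nlinarith [one_sub_sq_div_two_le_cos (x := 1 / (n : ℝ))]

lemma cos_one_div_natCast_pos (n : ℕ) : 0 < cos (1 / (n : ℝ)) :=
  one_half_pos.trans_le (one_half_le_cos_one_div_natCast n)

lemma cos_one_div_natCast_le_of_le {m n : ℕ} (hm : 1 ≤ m) (hmn : m ≤ n) :
    cos (1 / (m : ℝ)) ≤ cos (1 / (n : ℝ)) :=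
  cos_le_cos_of_nonneg_of_le_pi (one_div_natCast_mem_Icc n).1
    ((one_div_natCast_mem_Icc m).2.trans (by linarith [pi_gt_three]))
    (one_div_natCast_le_one_div hm hmn)

lemma one_div_natCast_mem_Ioo_pi_div_two (n : ℕ) :
    1 / (n : ℝ) ∈ Set.Ioo (-(π / 2)) (π / 2) := by
  obtain ⟨h₀, h₁⟩ := one_div_natCast_mem_Icc n
  constructor <;> linarith [pi_gt_three]

lemma tan_one_div_natCast_le_of_le {m n : ℕ} (hm : 1 ≤ m) (hmn : m ≤ n) :
    tan (1 / (n : ℝ)) ≤ tan (1 / (m : ℝ)) :=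
  strictMonoOn_tan.monotoneOn (one_div_natCast_mem_Ioo_pi_div_two n)
    (one_div_natCast_mem_Ioo_pi_div_two m) (one_div_natCast_le_one_div hm hmn)

lemma tendsto_tan_one_div_natCast_succ :
    Tendsto (fun k : ℕ => tan (1 / ((k + 1 : ℕ) : ℝ))) atTop (nhds 0) := by
  have h := (continuousAt_tan.mpr (by simp)).tendsto.comp
    (tendsto_one_div_add_atTop_nhds_zero_nat (𝕜 := ℝ))
  simpa [Function.comp_def] using h

end TrigAtOneDivNat

section PatchScale

def scaleRatio (n : ℕ) : ℝ := (4 * cos (1 / (n : ℝ)))⁻¹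

-- Holds also at `n = 0`, where `1 / 0 = 0` in `ℝ` makes `scaleRatio 0 = 1 / 4`.
lemma patchScale_succ (n : ℕ) : patchScale (n + 1) = scaleRatio n * patchScale n := by
  unfold patchScale scaleRatio
  cases n with
  | zero => norm_num
  | succ n =>
    have hexp : (1 : ℤ) - 2 * ((n + 1 + 1 : ℕ) : ℤ) = (1 - 2 * ((n + 1 : ℕ) : ℤ)) + (-2) := by
      push_cast; ring
    rw [Nat.add_sub_cancel, Nat.add_sub_cancel, Finset.prod_Icc_succ_top (by omega), hexp,
      zpow_add₀ two_ne_zero]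
    push_cast
    ring

lemma patchScale_pos (n : ℕ) : 0 < patchScale n :=
  mul_pos (by positivity) <| Finset.prod_pos fun j _ => inv_pos.mpr (cos_one_div_natCast_pos j)

lemma quarter_le_scaleRatio (n : ℕ) : 1 / 4 ≤ scaleRatio n := by
  rw [one_div]
  exact inv_anti₀ (mul_pos four_pos (cos_one_div_natCast_pos n))
    (by linarith [cos_le_one (1 / (n : ℝ))])

lemma scaleRatio_le_half (n : ℕ) : scaleRatio n ≤ 1 / 2 := by
  rw [one_div]
  exact inv_anti₀ two_pos (by linarith [one_half_le_cos_one_div_natCast n])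

lemma scaleRatio_le_of_le {m n : ℕ} (hm : 1 ≤ m) (hmn : m ≤ n) :
    scaleRatio n ≤ scaleRatio m :=
  inv_anti₀ (mul_pos four_pos (cos_one_div_natCast_pos m))
    (by linarith [cos_one_div_natCast_le_of_le hm hmn])

lemma tendsto_scaleRatio : Tendsto scaleRatio atTop (nhds (1 / 4)) := by
  have hcos : Tendsto (fun n : ℕ => cos (1 / (n : ℝ))) atTop (nhds (cos 0)) :=
    (continuous_cos.tendsto 0).comp tendsto_one_div_atTop_nhds_zero_nat
  rw [cos_zero] at hcos
  rw [show (1 : ℝ) / 4 = (4 * 1)⁻¹ by norm_num]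
  exact (hcos.const_mul 4).inv₀ (by norm_num)

def patchTail (k : ℕ) : ℝ := ∑' j : ℕ, patchScale (k + 1 + j)

lemma summable_patchScale_add (k : ℕ) : Summable fun j : ℕ => patchScale (k + 1 + j) :=
  summable_of_succ_le_mul (fun j => (patchScale_pos _).le) (by norm_num) one_half_lt_one
    fun j => (patchScale_succ (k + 1 + j)).trans_le <|
      mul_le_mul_of_nonneg_right (scaleRatio_le_half _) (patchScale_pos _).le

lemma patchTail_le (k : ℕ) :
    patchTail k ≤ scaleRatio k / (1 - scaleRatio (k + 1)) * patchScale k := by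
  rw [div_mul_eq_mul_div, ← patchScale_succ]
  exact tsum_le_of_succ_le_mul (fun j => (patchScale_pos _).le)
    (by linarith [quarter_le_scaleRatio (k + 1)]) (by linarith [scaleRatio_le_half (k + 1)])
    fun j => (patchScale_succ (k + 1 + j)).trans_le <|
      mul_le_mul_of_nonneg_right (scaleRatio_le_of_le (by omega) (by omega)) (patchScale_pos _).le

lemma le_patchTail (k : ℕ) : scaleRatio k / (1 - 1 / 4) * patchScale k ≤ patchTail k := by
  rw [div_mul_eq_mul_div, ← patchScale_succ]
  exact div_le_tsum_of_mul_le_succ (summable_patchScale_add k) (by norm_num) (by norm_num)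
    fun j => (mul_le_mul_of_nonneg_right (quarter_le_scaleRatio _) (patchScale_pos _).le).trans_eq
      (patchScale_succ (k + 1 + j)).symm

lemma tendsto_patchTail_div_patchScale :
    Tendsto (fun k => patchTail k / patchScale k) atTop (nhds (1 / 3)) := by
  have lower : Tendsto (fun k => scaleRatio k / (1 - 1 / 4)) atTop (nhds (1 / 3)) := by
    rw [show (1 : ℝ) / 3 = 1 / 4 / (1 - 1 / 4) by norm_num]
    exact tendsto_scaleRatio.div_const _
  have upper :
      Tendsto (fun k => scaleRatio k / (1 - scaleRatio (k + 1))) atTop (nhds (1 / 3)) := by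
    rw [show (1 : ℝ) / 3 = 1 / 4 / (1 - 1 / 4) by norm_num]
    exact tendsto_scaleRatio.div (tendsto_const_nhds.sub
      (tendsto_scaleRatio.comp (tendsto_add_atTop_nat 1))) (by norm_num)
  exact tendsto_of_tendsto_of_tendsto_of_le_of_le lower upper
    (fun k => (le_div_iff₀ (patchScale_pos k)).mpr (le_patchTail k))
    fun k => (div_le_iff₀ (patchScale_pos k)).mpr (patchTail_le k)

end PatchScale

section CornerSum

variable {τ : ℕ → ℝ}

lemma cornerTerm_nonneg (hτ : ∀ j : ℕ, 1 ≤ j → 0 ≤ τ j ∧ τ j ≤ 2 * tan (1 / (j : ℝ)))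
    (k j : ℕ) : 0 ≤ 2 * patchScale (k + 1 + j) * τ (k + 1 + j) :=
  mul_nonneg (mul_nonneg two_pos.le (patchScale_pos _).le) (hτ _ (by omega)).1

lemma cornerSum_le_tan_mul_patchTail
    (hτ : ∀ j : ℕ, 1 ≤ j → 0 ≤ τ j ∧ τ j ≤ 2 * tan (1 / (j : ℝ))) (k : ℕ) :
    ∑' j : ℕ, 2 * patchScale (k + 1 + j) * τ (k + 1 + j) ≤
      4 * tan (1 / ((k + 1 : ℕ) : ℝ)) * patchTail k := by
  have hterm (j : ℕ) : 2 * patchScale (k + 1 + j) * τ (k + 1 + j) ≤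
      4 * tan (1 / ((k + 1 : ℕ) : ℝ)) * patchScale (k + 1 + j) := by
    have hτj : τ (k + 1 + j) ≤ 2 * tan (1 / ((k + 1 : ℕ) : ℝ)) :=
      (hτ _ (by omega)).2.trans <| by
        gcongr; exact tan_one_div_natCast_le_of_le (by omega) (by omega)
    nlinarith [patchScale_pos (k + 1 + j)]
  have hsum := (summable_patchScale_add k).mul_left (4 * tan (1 / ((k + 1 : ℕ) : ℝ)))
  have hsummable : Summable fun j : ℕ => 2 * patchScale (k + 1 + j) * τ (k + 1 + j) :=
    hsum.of_nonneg_of_le (cornerTerm_nonneg hτ k) hterm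
  rw [patchTail, ← tsum_mul_left]
  exact hsummable.tsum_le_tsum hterm hsum

lemma tendsto_cornerSum_div_patchScale
    (hτ : ∀ j : ℕ, 1 ≤ j → 0 ≤ τ j ∧ τ j ≤ 2 * tan (1 / (j : ℝ))) :
    Tendsto (fun k => (∑' j : ℕ, 2 * patchScale (k + 1 + j) * τ (k + 1 + j)) / patchScale k)
      atTop (nhds 0) := by
  have upper : Tendsto (fun k => 4 * tan (1 / ((k + 1 : ℕ) : ℝ)) * (patchTail k / patchScale k))
      atTop (nhds 0) := by
    rw [show (0 : ℝ) = 4 * 0 * (1 / 3) by norm_num]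
    exact (tendsto_tan_one_div_natCast_succ.const_mul 4).mul tendsto_patchTail_div_patchScale
  refine tendsto_of_tendsto_of_tendsto_of_le_of_le tendsto_const_nhds upper
    (fun k => div_nonneg (tsum_nonneg (cornerTerm_nonneg hτ k)) (patchScale_pos k).le) fun k => ?_
  rw [← mul_div_assoc]
  exact div_le_div_of_nonneg_right (cornerSum_le_tan_mul_patchTail hτ k) (patchScale_pos k).le

end CornerSum

/-- If `0 ≤ τ_j ≤ 2 tan(1/j)` and
`R_k = (3 ∑_{j>k} L_j - L_k) - ∑_{j>k} 2 L_j τ_j`, then `R_k / L_k → 0`. -/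
theorem length_error_vanishes
    (τ : ℕ → ℝ) (hτ : ∀ j : ℕ, 1 ≤ j → 0 ≤ τ j ∧ τ j ≤ 2 * Real.tan (1 / (j : ℝ))) :
    Tendsto (fun k : ℕ =>
        ((3 * ∑' j : ℕ, patchScale (k + 1 + j) - patchScale k) -
          ∑' j : ℕ, 2 * patchScale (k + 1 + j) * τ (k + 1 + j)) / patchScale k)
      atTop (nhds 0) := by
  have h := ((tendsto_patchTail_div_patchScale.const_mul 3).sub_const 1).sub
    (tendsto_cornerSum_div_patchScale hτ)
  rw [show (3 : ℝ) * (1 / 3) - 1 - 0 = 0 by norm_num] at h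
  refine h.congr fun k => ?_
  rw [patchTail, sub_div, sub_div, mul_div_assoc, div_self (patchScale_pos k).ne']
end
end
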